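/- Let (a,b) be a fictitious-play trajectory. Suppose t ≥ 1, round t−1 is axis-crossing, and τ is the smallest axis-crossing round with τ > t−1. Then ρ_t − 2 ≤ τ − t ≤ ρ_t. -/

import Mathlib

open MeasureTheory

/-- Bob's choice of the left or right piece. -/
inductive Choice
  | L
  | R
deriving DecidableEq

/-- The cumulative valuation `V(x) = ∫_0^x v`. -/
noncomputable def cumul (v : ℝ → ℝ) (x : ℝ) : ℝ := ∫ y in (0:ℝ)..x, v y

/-- `v` is an integrable value density on `[0,1]`, bounded between `lo` and `hi`,
integrating to `1`. -/
def IsDensity (lo hi : ℝ) (v : ℝ → ℝ) : Prop :=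
  IntervalIntegrable v volume 0 1 ∧
  (∀ x ∈ Set.Icc (0:ℝ) 1, lo ≤ v x ∧ v x ≤ hi) ∧
  (∫ y in (0:ℝ)..1, v y) = 1

/-- Alice's round-`t` utility: if Bob picks `L` she gets `[a_t,1]`, else `[0,a_t]`. -/
noncomputable def uA (vA : ℝ → ℝ) (a : ℕ → ℝ) (b : ℕ → Choice) (t : ℕ) : ℝ :=
  if b t = Choice.L then 1 - cumul vA (a t) else cumul vA (a t)

/-- Bob's round-`t` utility: if he picks `L` he gets `[0,a_t]`, else `[a_t,1]`. -/
noncomputable def uB (vB : ℝ → ℝ) (a : ℕ → ℝ) (b : ℕ → Choice) (t : ℕ) : ℝ :=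
  if b t = Choice.L then cumul vB (a t) else 1 - cumul vB (a t)

/-- `α_t = r_t − ℓ_t`: number of `R` choices minus number of `L` choices up to round `t`. -/
noncomputable def alphaFP (b : ℕ → Choice) (t : ℕ) : ℝ :=
  ∑ i ∈ Finset.Icc 1 t, (if b i = Choice.R then (1:ℝ) else -1)

/-- `β_t = Σ_{i=1}^t (2 V_B(a_i) − 1)`. -/
noncomputable def betaFP (vB : ℝ → ℝ) (a : ℕ → ℝ) (t : ℕ) : ℝ :=
  ∑ i ∈ Finset.Icc 1 t, (2 * cumul vB (a i) - 1)

/-- The radius `ρ_t = |α_t| + |β_t|`. -/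
noncomputable def rhoFP (vB : ℝ → ℝ) (a : ℕ → ℝ) (b : ℕ → Choice) (t : ℕ) : ℝ :=
  |alphaFP b t| + |betaFP vB a t|

/-- `(a,b)` is a fictitious-play trajectory. -/
def IsFictitiousPlay (vB : ℝ → ℝ) (a : ℕ → ℝ) (b : ℕ → Choice) : Prop :=
  ∀ t : ℕ,
    (0 < alphaFP b t → a (t+1) = 1) ∧
    (alphaFP b t < 0 → a (t+1) = 0) ∧
    (0 < betaFP vB a t → b (t+1) = Choice.L) ∧
    (betaFP vB a t < 0 → b (t+1) = Choice.R)

/-- Round `t` is axis-crossing. -/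
def AxisCrossing (vB : ℝ → ℝ) (a : ℕ → ℝ) (b : ℕ → Choice) (t : ℕ) : Prop :=
  alphaFP b t = 0 ∨
  (betaFP vB a t ≤ 0 ∧ 0 < betaFP vB a (t+1)) ∨
  (0 ≤ betaFP vB a t ∧ betaFP vB a (t+1) < 0)

/-!
Between two consecutive axis crossings the point `(α, β)` stays in one open quadrant, where every
round translates it by the same vector. In the quadrant `α > 0, β > 0` Alice cuts at `1` and Bob
picks `L`, so `α` drops by one and `β` grows by one per round until `α` reaches `0`, after `α_t`
rounds; the crossing just before forces `β_t ≤ 1`. In the quadrant `α < 0, β > 0` that crossing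
forces `α_t = -1`, and `β` drops by one per round until it changes sign, after `⌊β_t⌋` rounds.
The other two quadrants follow from the symmetry `(α, β) ↦ (-α, -β)`, and two consecutive
crossings force `ρ_t ≤ 2`.
-/

open Set

/-- The dynamics of `(α_t, β_t)` along a fictitious-play trajectory, abstracted so that it is
invariant under `(A, B) ↦ (-A, -B)`. -/
structure FPDynamics (A B : ℕ → ℝ) : Prop where
  B_succ_of_pos : ∀ s, 0 < A s → B (s + 1) = B s + 1
  B_succ_of_neg : ∀ s, A s < 0 → B (s + 1) = B s - 1
  A_succ_of_pos : ∀ s, 0 < B s → A (s + 1) = A s - 1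
  A_succ_of_neg : ∀ s, B s < 0 → A (s + 1) = A s + 1
  abs_B_succ_sub_le : ∀ s, |B (s + 1) - B s| ≤ 1
  A_succ : ∀ s, A (s + 1) = A s + 1 ∨ A (s + 1) = A s - 1
  A_int : ∀ s, ∃ n : ℤ, A s = n

def AxisCross (A B : ℕ → ℝ) (s : ℕ) : Prop :=
  A s = 0 ∨ (B s ≤ 0 ∧ 0 < B (s + 1)) ∨ (0 ≤ B s ∧ B (s + 1) < 0)

def IsNextCross (A B : ℕ → ℝ) (s τ : ℕ) : Prop :=
  s < τ ∧ AxisCross A B τ ∧ ∀ u, s < u → u < τ → ¬ AxisCross A B u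

section Crossings

variable {A B : ℕ → ℝ} {s τ τ' u : ℕ}

theorem AxisCross.neg_iff : AxisCross (-A) (-B) s ↔ AxisCross A B s := by
  simp only [AxisCross, Pi.neg_apply, neg_eq_zero, neg_nonpos, neg_pos, neg_nonneg, neg_lt_zero]
  tauto

theorem IsNextCross.neg_iff : IsNextCross (-A) (-B) s τ ↔ IsNextCross A B s τ := by
  simp only [IsNextCross, AxisCross.neg_iff]

theorem IsNextCross.unique (h : IsNextCross A B s τ) (h' : IsNextCross A B s τ') : τ = τ' := by
  obtain ⟨hsτ, hτ, hfirst⟩ := h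
  obtain ⟨hsτ', hτ', hfirst'⟩ := h'
  rcases lt_trichotomy τ τ' with hlt | heq | hgt
  · exact absurd hτ (hfirst' τ hsτ hlt)
  · exact heq
  · exact absurd hτ' (hfirst τ' hsτ' hgt)

theorem isNextCross_add {n : ℕ} (hcross : AxisCross A B (s + 1 + n))
    (hfirst : ∀ j < n, ¬ AxisCross A B (s + 1 + j)) : IsNextCross A B s (s + 1 + n) := by
  refine ⟨by omega, hcross, fun u hsu hun => ?_⟩
  have := hfirst (u - (s + 1)) (by omega)
  rwa [Nat.add_sub_cancel' hsu] at this

theorem not_axisCross_of_pos (hA : A u ≠ 0) (hB : 0 < B u) (hB' : 0 ≤ B (u + 1)) :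
    ¬ AxisCross A B u := by
  rintro (hA0 | ⟨hB0, -⟩ | ⟨-, hB0⟩)
  · exact hA hA0
  · linarith
  · linarith

end Crossings

namespace FPDynamics

variable {A B : ℕ → ℝ} {s τ u : ℕ}

theorem neg (h : FPDynamics A B) : FPDynamics (-A) (-B) where
  B_succ_of_pos s hs := by
    simp only [Pi.neg_apply] at hs ⊢
    linarith [h.B_succ_of_neg s (by linarith)]
  B_succ_of_neg s hs := by
    simp only [Pi.neg_apply] at hs ⊢
    linarith [h.B_succ_of_pos s (by linarith)]
  A_succ_of_pos s hs := by
    simp only [Pi.neg_apply] at hs ⊢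
    linarith [h.A_succ_of_neg s (by linarith)]
  A_succ_of_neg s hs := by
    simp only [Pi.neg_apply] at hs ⊢
    linarith [h.A_succ_of_pos s (by linarith)]
  abs_B_succ_sub_le s := by
    simpa only [Pi.neg_apply, neg_sub_neg, abs_sub_comm] using h.abs_B_succ_sub_le s
  A_succ s := by
    simp only [Pi.neg_apply]
    rcases h.A_succ s with hs | hs
    · exact Or.inr (by linarith)
    · exact Or.inl (by linarith)
  A_int s := by
    obtain ⟨n, hn⟩ := h.A_int s
    exact ⟨-n, by simp [hn]⟩

variable (h : FPDynamics A B)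
include h

theorem exists_nat_eq (hA : 0 ≤ A u) : ∃ m : ℕ, A u = m := by
  obtain ⟨n, hn⟩ := h.A_int u
  lift n to ℕ using by exact_mod_cast hn ▸ hA
  exact ⟨n, by simp [hn]⟩

theorem crosses_upward_of_pos (hA : 0 < A u) (hc : AxisCross A B u) :
    B u ≤ 0 ∧ 0 < B (u + 1) := by
  have hstep := h.B_succ_of_pos u hA
  rcases hc with hA0 | hup | ⟨hB, hB'⟩
  · exact absurd hA0 hA.ne'
  · exact hup
  · linarith

theorem crosses_downward_of_neg (hA : A u < 0) (hc : AxisCross A B u) :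
    0 ≤ B u ∧ B (u + 1) < 0 := by
  simpa using h.neg.crosses_upward_of_pos (by simpa using hA) (AxisCross.neg_iff.2 hc)

theorem eq_zero_or_abs_B_le_one (hc : AxisCross A B u) :
    A u = 0 ∨ |B u| ≤ 1 ∧ |B (u + 1)| ≤ 1 := by
  have hstep := abs_le.1 (h.abs_B_succ_sub_le u)
  rcases hc with hA0 | ⟨hB, hB'⟩ | ⟨hB, hB'⟩
  · exact Or.inl hA0
  all_goals exact Or.inr ⟨abs_le.2 ⟨by linarith, by linarith⟩, abs_le.2 ⟨by linarith, by linarith⟩⟩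

theorem B_ne_zero_of_not_axisCross (hc : ¬ AxisCross A B u) : B u ≠ 0 := by
  intro hB
  apply hc
  rcases lt_trichotomy (A u) 0 with hA | hA | hA
  · exact Or.inr (Or.inr ⟨hB.ge, by rw [h.B_succ_of_neg u hA, hB]; norm_num⟩)
  · exact Or.inl hA
  · exact Or.inr (Or.inl ⟨hB.le, by rw [h.B_succ_of_pos u hA, hB]; norm_num⟩)

theorem A_lt_two (h0 : AxisCross A B s) (h1 : AxisCross A B (s + 1)) : A (s + 1) < 2 := by
  by_contra! hA
  have hAs : 0 < A s := by rcases h.A_succ s with hs | hs <;> linarith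
  linarith [(h.crosses_upward_of_pos hAs h0).2, (h.crosses_upward_of_pos (by linarith) h1).1]

theorem radius_le_two (h0 : AxisCross A B s) (h1 : AxisCross A B (s + 1)) :
    |A (s + 1)| + |B (s + 1)| ≤ 2 := by
  have hA : |A (s + 1)| ≤ 1 := by
    have hlt := h.A_lt_two h0 h1
    have hgt : -A (s + 1) < 2 :=
      h.neg.A_lt_two (AxisCross.neg_iff.2 h0) (AxisCross.neg_iff.2 h1)
    obtain ⟨n, hn⟩ := h.A_int (s + 1)
    rw [hn] at hlt hgt ⊢
    have hgt' : -n < 2 := by exact_mod_cast hgt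
    have hlt' : n < 2 := by exact_mod_cast hlt
    exact_mod_cast (abs_le.2 ⟨by omega, by omega⟩ : |n| ≤ 1)
  have hB : |B (s + 1)| ≤ 1 := by
    rcases h.eq_zero_or_abs_B_le_one h0 with hAs | hB
    · rcases h.eq_zero_or_abs_B_le_one h1 with hAs' | hB
      · rcases h.A_succ s with hs | hs <;> linarith
      · exact hB.1
    · exact hB.2
  linarith

theorem B_le_one (h0 : AxisCross A B s) (hA : 0 < A (s + 1)) : B (s + 1) ≤ 1 := by
  rcases h.eq_zero_or_abs_B_le_one h0 with hAs | hB
  · have hBs : B s ≤ 0 := by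
      by_contra! hBs
      linarith [h.A_succ_of_pos s hBs]
    linarith [(abs_le.1 (h.abs_B_succ_sub_le s)).2]
  · exact (abs_le.1 hB.2).2

theorem A_eq_neg_one (h0 : AxisCross A B s) (hA : A (s + 1) < 0) (hB : 0 < B (s + 1)) :
    A (s + 1) = -1 := by
  have hgt : -2 < A (s + 1) := by
    by_contra! hA2
    have hAs : A s < 0 := by rcases h.A_succ s with hs | hs <;> linarith
    linarith [(h.crosses_downward_of_neg hAs h0).2]
  obtain ⟨n, hn⟩ := h.A_int (s + 1)
  rw [hn] at hA hgt ⊢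
  have hA' : n < 0 := by exact_mod_cast hA
  have hgt' : -2 < n := by exact_mod_cast hgt
  obtain rfl : n = -1 := by omega
  norm_num

theorem run_pos_pos {n : ℕ} (hA : (n : ℝ) ≤ A u) (hB : 0 < B u) :
    ∀ j ≤ n, A (u + j) = A u - j ∧ B (u + j) = B u + j := by
  intro j hj
  induction j with
  | zero => simp
  | succ j ih =>
    obtain ⟨hAj, hBj⟩ := ih (by omega)
    have hjn : (j : ℝ) + 1 ≤ n := by exact_mod_cast hj
    have hj0 : (0 : ℝ) ≤ j := j.cast_nonneg
    have hApos : 0 < A (u + j) := by rw [hAj]; linarith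
    have hBpos : 0 < B (u + j) := by rw [hBj]; linarith
    rw [← add_assoc, h.A_succ_of_pos _ hBpos, h.B_succ_of_pos _ hApos, hAj, hBj]
    push_cast
    constructor <;> ring

theorem run_neg_pos {n : ℕ} (hA : A u < 0) (hB : (n : ℝ) ≤ B u) :
    ∀ j ≤ n, A (u + j) = A u - j ∧ B (u + j) = B u - j := by
  intro j hj
  induction j with
  | zero => simp
  | succ j ih =>
    obtain ⟨hAj, hBj⟩ := ih (by omega)
    have hjn : (j : ℝ) + 1 ≤ n := by exact_mod_cast hj
    have hj0 : (0 : ℝ) ≤ j := j.cast_nonneg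
    have hAneg : A (u + j) < 0 := by rw [hAj]; linarith
    have hBpos : 0 < B (u + j) := by rw [hBj]; linarith
    rw [← add_assoc, h.A_succ_of_pos _ hBpos, h.B_succ_of_neg _ hAneg, hAj, hBj]
    push_cast
    constructor <;> ring

theorem isNextCross_of_pos_pos {m : ℕ} (hA : A (s + 1) = m) (hB : 0 < B (s + 1)) :
    IsNextCross A B s (s + 1 + m) := by
  have run := h.run_pos_pos hA.ge hB
  refine isNextCross_add (Or.inl ?_) fun j hj => ?_
  · rw [(run m le_rfl).1, hA, sub_self]
  obtain ⟨hAj, hBj⟩ := run j hj.le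
  have hBj' : B (s + 1 + j + 1) = B (s + 1) + (j + 1 : ℕ) := (run (j + 1) hj).2
  have hjm : (j : ℝ) + 1 ≤ m := by exact_mod_cast hj
  have hj0 : (0 : ℝ) ≤ j := j.cast_nonneg
  refine not_axisCross_of_pos ?_ ?_ ?_
  · rw [hAj, hA]; linarith
  · rw [hBj]; linarith
  · rw [hBj']; push_cast; linarith

theorem isNextCross_of_neg_pos (hA : A (s + 1) < 0) (hB : 0 < B (s + 1)) :
    IsNextCross A B s (s + 1 + ⌊B (s + 1)⌋₊) := by
  set n := ⌊B (s + 1)⌋₊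
  have hn : (n : ℝ) ≤ B (s + 1) := Nat.floor_le hB.le
  have hn' : B (s + 1) < n + 1 := Nat.lt_floor_add_one _
  have run := h.run_neg_pos hA hn
  refine isNextCross_add ?_ fun j hj => ?_
  · obtain ⟨hAn, hBn⟩ := run n le_rfl
    have hAneg : A (s + 1 + n) < 0 := by rw [hAn]; linarith [n.cast_nonneg (α := ℝ)]
    refine Or.inr (Or.inr ⟨by rw [hBn]; linarith, ?_⟩)
    rw [h.B_succ_of_neg _ hAneg, hBn]
    linarith
  obtain ⟨hAj, hBj⟩ := run j hj.le
  have hBj' : B (s + 1 + j + 1) = B (s + 1) - (j + 1 : ℕ) := (run (j + 1) hj).2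
  have hjn : (j : ℝ) + 1 ≤ n := by exact_mod_cast hj
  have hj0 : (0 : ℝ) ≤ j := j.cast_nonneg
  refine not_axisCross_of_pos ?_ ?_ ?_
  · rw [hAj]; linarith
  · rw [hBj]; linarith
  · rw [hBj']; push_cast; linarith

theorem spacing_of_B_pos (h0 : AxisCross A B s) (hτ : IsNextCross A B s τ)
    (hA : A (s + 1) ≠ 0) (hB : 0 < B (s + 1)) :
    |A (s + 1)| + |B (s + 1)| - 2 ≤ (τ : ℝ) - (s + 1 : ℕ) ∧
      (τ : ℝ) - (s + 1 : ℕ) ≤ |A (s + 1)| + |B (s + 1)| := by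
  rcases hA.lt_or_gt with hA | hA
  · obtain rfl := hτ.unique (h.isNextCross_of_neg_pos hA hB)
    have hn := Nat.floor_le hB.le
    have hn' := Nat.lt_floor_add_one (B (s + 1))
    rw [h.A_eq_neg_one h0 hA hB, abs_of_pos hB]
    push_cast
    constructor <;> norm_num <;> linarith
  · obtain ⟨m, hm⟩ := h.exists_nat_eq hA.le
    obtain rfl := hτ.unique (h.isNextCross_of_pos_pos hm hB)
    have hB1 := h.B_le_one h0 hA
    rw [abs_of_pos hA, abs_of_pos hB, hm]
    push_cast
    constructor <;> linarith

theorem spacing (h0 : AxisCross A B s) (hτ : IsNextCross A B s τ) :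
    |A (s + 1)| + |B (s + 1)| - 2 ≤ (τ : ℝ) - (s + 1 : ℕ) ∧
      (τ : ℝ) - (s + 1 : ℕ) ≤ |A (s + 1)| + |B (s + 1)| := by
  by_cases h1 : AxisCross A B (s + 1)
  · obtain rfl := hτ.unique (isNextCross_add (n := 0) h1 (by simp))
    have := h.radius_le_two h0 h1
    simp only [add_zero, sub_self]
    constructor <;> linarith [abs_nonneg (A (s + 1)), abs_nonneg (B (s + 1))]
  have hA : A (s + 1) ≠ 0 := fun hA => h1 (Or.inl hA)
  rcases (h.B_ne_zero_of_not_axisCross h1).lt_or_gt with hB | hB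
  · simpa using h.neg.spacing_of_B_pos (AxisCross.neg_iff.2 h0) (IsNextCross.neg_iff.2 hτ)
      (by simpa using hA) (by simpa using hB)
  · exact h.spacing_of_B_pos h0 hτ hA hB

end FPDynamics

theorem IsDensity.cumul_mem_Icc {lo hi : ℝ} {v : ℝ → ℝ} (hv : IsDensity lo hi v) (hlo : 0 ≤ lo)
    {x : ℝ} (hx : x ∈ Icc (0 : ℝ) 1) : cumul v x ∈ Icc (0 : ℝ) 1 := by
  obtain ⟨hint, hbd, hone⟩ := hv
  have hnn : ∀ y ∈ Icc (0 : ℝ) 1, 0 ≤ v y := fun y hy => hlo.trans (hbd y hy).1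
  refine ⟨intervalIntegral.integral_nonneg hx.1 fun y hy => hnn y ⟨hy.1, hy.2.trans hx.2⟩, ?_⟩
  rw [← hone]
  refine intervalIntegral.integral_mono_interval le_rfl hx.1 hx.2 ?_ hint
  filter_upwards [ae_restrict_mem measurableSet_Ioc] with y hy
  exact hnn y (Ioc_subset_Icc_self hy)

theorem alphaFP_succ (b : ℕ → Choice) (s : ℕ) :
    alphaFP b (s + 1) = alphaFP b s + (if b (s + 1) = Choice.R then 1 else -1) :=
  Finset.sum_Icc_succ_top (Nat.le_add_left 1 s) _

theorem betaFP_succ (vB : ℝ → ℝ) (a : ℕ → ℝ) (s : ℕ) :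
    betaFP vB a (s + 1) = betaFP vB a s + (2 * cumul vB (a (s + 1)) - 1) :=
  Finset.sum_Icc_succ_top (Nat.le_add_left 1 s) _

theorem alphaFP_succ_eq_or (b : ℕ → Choice) (s : ℕ) :
    alphaFP b (s + 1) = alphaFP b s + 1 ∨ alphaFP b (s + 1) = alphaFP b s - 1 := by
  rw [alphaFP_succ]
  split_ifs
  · exact Or.inl rfl
  · exact Or.inr (sub_eq_add_neg _ _).symm

theorem alphaFP_int (b : ℕ → Choice) (s : ℕ) : ∃ n : ℤ, alphaFP b s = n := by
  induction s with
  | zero => exact ⟨0, by simp [alphaFP]⟩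
  | succ s ih =>
    obtain ⟨n, hn⟩ := ih
    rcases alphaFP_succ_eq_or b s with hs | hs
    · exact ⟨n + 1, by rw [hs, hn]; push_cast; ring⟩
    · exact ⟨n - 1, by rw [hs, hn]; push_cast; ring⟩

theorem FPDynamics.of_isFictitiousPlay {lo hi : ℝ} {vB : ℝ → ℝ} {a : ℕ → ℝ} {b : ℕ → Choice}
    (hlo : 0 ≤ lo) (hB : IsDensity lo hi vB) (ha : ∀ t : ℕ, 1 ≤ t → a t ∈ Icc (0 : ℝ) 1)
    (hfp : IsFictitiousPlay vB a b) : FPDynamics (alphaFP b) (betaFP vB a) where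
  B_succ_of_pos s hs := by rw [betaFP_succ, (hfp s).1 hs, show cumul vB 1 = 1 from hB.2.2]; ring
  B_succ_of_neg s hs := by
    rw [betaFP_succ, (hfp s).2.1 hs, cumul, intervalIntegral.integral_same]
    ring
  A_succ_of_pos s hs := by rw [alphaFP_succ, (hfp s).2.2.1 hs]; simp [sub_eq_add_neg]
  A_succ_of_neg s hs := by rw [alphaFP_succ, (hfp s).2.2.2 hs, if_pos rfl]
  abs_B_succ_sub_le s := by
    obtain ⟨h0, h1⟩ := hB.cumul_mem_Icc hlo (ha (s + 1) (Nat.le_add_left 1 s))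
    rw [betaFP_succ, add_sub_cancel_left, abs_le]
    constructor <;> linarith
  A_succ := alphaFP_succ_eq_or b
  A_int := alphaFP_int b

theorem axis_crossing_spacing_general
    (δ Δ : ℝ) (hδ : 0 < δ)
    (vB : ℝ → ℝ) (hB : IsDensity δ Δ vB)
    (a : ℕ → ℝ) (b : ℕ → Choice)
    (ha : ∀ t : ℕ, 1 ≤ t → a t ∈ Set.Icc (0:ℝ) 1)
    (hfp : IsFictitiousPlay vB a b)
    (t τ : ℕ) (ht : 1 ≤ t)
    (hcross : AxisCrossing vB a b (t - 1))
    (hτgt : t - 1 < τ)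
    (hτcross : AxisCrossing vB a b τ)
    (hτfirst : ∀ s : ℕ, t - 1 < s → s < τ → ¬ AxisCrossing vB a b s) :
    rhoFP vB a b t - 2 ≤ (τ : ℝ) - (t : ℝ) ∧ (τ : ℝ) - (t : ℝ) ≤ rhoFP vB a b t := by
  obtain ⟨s, rfl⟩ := Nat.exists_eq_add_of_le' ht
  rw [Nat.add_sub_cancel] at hcross hτgt hτfirst
  exact (FPDynamics.of_isFictitiousPlay hδ.le hB ha hfp).spacing hcross ⟨hτgt, hτcross, hτfirst⟩

/-- If round `t−1` is axis-crossing and `τ` is the next axis-crossing round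
after `t−1`, then `ρ_t − 2 ≤ τ − t ≤ ρ_t`. -/
theorem axis_crossing_spacing
    (δ Δ : ℝ) (hδ : 0 < δ) (hδΔ : δ ≤ Δ)
    (vA vB : ℝ → ℝ) (hA : IsDensity δ Δ vA) (hB : IsDensity δ Δ vB)
    (a : ℕ → ℝ) (b : ℕ → Choice)
    (ha : ∀ t : ℕ, 1 ≤ t → a t ∈ Set.Icc (0:ℝ) 1)
    (hfp : IsFictitiousPlay vB a b)
    (t τ : ℕ) (ht : 1 ≤ t)
    (hcross : AxisCrossing vB a b (t - 1))
    (hτgt : t - 1 < τ)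
    (hτcross : AxisCrossing vB a b τ)
    (hτfirst : ∀ s : ℕ, t - 1 < s → s < τ → ¬ AxisCrossing vB a b s) :
    rhoFP vB a b t - 2 ≤ (τ : ℝ) - (t : ℝ) ∧ (τ : ℝ) - (t : ℝ) ≤ rhoFP vB a b t :=
  axis_crossing_spacing_general δ Δ hδ vB hB a b ha hfp t τ ht hcross hτgt hτcross hτfirst
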